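/- arXiv:2105.07283 — 3 statements merged into one kernel-verified Lean document; each statement's English description precedes it below -/
import Mathlib

section
/- Let 𝒢 be another sub-σ-field of 𝒜 (not necessarily contained in ℋ) and assume that P[A | ℋ] = E[ P[A | 𝒢] | ℋ ] almost surely. Then for all t ∈ (0,1) the cost-weighted Bayes losses satisfy L*_𝒢(t) ≤ L*_ℋ(t). -/
open MeasureTheory

/-- Cost-weighted mean loss `L(H, t) = (1 - t) P[A ∩ Hᶜ] + t P[Aᶜ ∩ H]`. -/
noncomputable def cwLoss {Ω : Type*} {mΩ : MeasurableSpace Ω} (P : Measure Ω) (A H : Set Ω)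
    (t : ℝ) : ℝ :=
  (1 - t) * (P (A ∩ Hᶜ)).toReal + t * (P (Aᶜ ∩ H)).toReal

/-- Cost-weighted Bayes loss `L*_ℱ(t) = inf_{F ∈ ℱ} L(F, t)`. -/
noncomputable def bayesLoss {Ω : Type*} {mΩ : MeasurableSpace Ω} (P : Measure Ω) (A : Set Ω)
    (F : MeasurableSpace Ω) (t : ℝ) : ℝ :=
  ⨅ H : {H : Set Ω // MeasurableSet[F] H}, cwLoss P A H t

/-! With `g = P[A | 𝒢]`, for every measurable `H` on which `1_A` and `g` have the same integral,
`L(H, t) = (1 - t) P[A] + ∫_H (t - g)`, which is smallest for `H = {g > t}`. The tower hypothesis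
makes every `ℋ`-set such an `H`, and `{g > t}` is itself one and lies in `𝒢`. -/

namespace MeasureTheory

variable {Ω : Type*} {mΩ : MeasurableSpace Ω} {μ : Measure Ω}

theorem setIntegral_setOf_neg_le {φ : Ω → ℝ} (hφ : Integrable φ μ) (hφm : Measurable φ)
    {s : Set Ω} (hs : MeasurableSet s) :
    ∫ x in {x | φ x < 0}, φ x ∂μ ≤ ∫ x in s, φ x ∂μ := by
  have hneg : MeasurableSet {x | φ x < 0} := measurableSet_lt hφm measurable_const
  rw [← integral_indicator hneg, ← integral_indicator hs]
  refine integral_mono (hφ.indicator hneg) (hφ.indicator hs) fun x => ?_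
  by_cases hx : φ x < 0 <;> by_cases hxs : x ∈ s <;>
    simp only [Set.indicator, Set.mem_ofPred_eq, hx, hxs, if_true, if_false] <;> linarith

theorem setIntegral_eq_of_condExp_ae_eq {m : MeasurableSpace Ω} (hm : m ≤ mΩ)
    [SigmaFinite (μ.trim hm)] {f g : Ω → ℝ} (hf : Integrable f μ) (hg : Integrable g μ)
    (hfg : μ[f | m] =ᵐ[μ] μ[g | m]) {s : Set Ω} (hs : MeasurableSet[m] s) :
    ∫ x in s, f x ∂μ = ∫ x in s, g x ∂μ := by
  rw [← setIntegral_condExp hm hf hs, ← setIntegral_condExp hm hg hs,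
    setIntegral_congr_ae (hm s hs) (hfg.mono fun _ hx _ => hx)]

end MeasureTheory

open MeasureTheory

section

variable {Ω : Type*} {mΩ : MeasurableSpace Ω} {P : Measure Ω} {A : Set Ω}

theorem cwLoss_eq [IsFiniteMeasure P] (hA : MeasurableSet A) {H : Set Ω} (hH : MeasurableSet H)
    (t : ℝ) : cwLoss P A H t =
      (1 - t) * P.real A + ∫ x in H, (t - A.indicator (fun _ => (1 : ℝ)) x) ∂P := by
  have hAH := measureReal_inter_add_sdiff (μ := P) (s := A) hH
  have hHA := measureReal_inter_add_sdiff (μ := P) (s := H) hA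
  rw [integral_sub (integrable_const t).integrableOn
      ((integrable_const 1).indicator hA).integrableOn,
    setIntegral_const, integral_indicator hA, setIntegral_const, measureReal_restrict_apply hA,
    smul_eq_mul, smul_eq_mul, cwLoss, ← Set.sdiff_eq, Set.inter_comm Aᶜ, ← Set.sdiff_eq,
    ← measureReal_def, ← measureReal_def]
  rw [Set.inter_comm] at hHA
  linear_combination (1 - t) * hAH + t * hHA

theorem cwLoss_setOf_lt_le [IsFiniteMeasure P] (hA : MeasurableSet A) {g : Ω → ℝ}
    (hg : Integrable g P) (hgm : Measurable g) {t : ℝ} {H : Set Ω} (hH : MeasurableSet H)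
    (hgA : ∫ x in {x | t < g x}, A.indicator (fun _ => (1 : ℝ)) x ∂P =
      ∫ x in {x | t < g x}, g x ∂P)
    (hHA : ∫ x in H, A.indicator (fun _ => (1 : ℝ)) x ∂P = ∫ x in H, g x ∂P) :
    cwLoss P A {x | t < g x} t ≤ cwLoss P A H t := by
  have hf : Integrable (A.indicator fun _ => (1 : ℝ)) P := (integrable_const 1).indicator hA
  have hsub {S : Set Ω}
      (hS : ∫ x in S, A.indicator (fun _ => (1 : ℝ)) x ∂P = ∫ x in S, g x ∂P) :
      ∫ x in S, (t - A.indicator (fun _ => (1 : ℝ)) x) ∂P = ∫ x in S, (t - g x) ∂P := by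
    rw [integral_sub (integrable_const t).integrableOn hf.integrableOn,
      integral_sub (integrable_const t).integrableOn hg.integrableOn, hS]
  have hlevel : {x | t < g x} = {x | t - g x < 0} := by simp only [sub_neg]
  rw [cwLoss_eq hA (measurableSet_lt measurable_const hgm), cwLoss_eq hA hH, hsub hgA, hsub hHA,
    hlevel]
  exact add_le_add_right (setIntegral_setOf_neg_le (φ := fun x => t - g x)
    ((integrable_const t).sub hg) (measurable_const.sub hgm) hH) _

theorem bayesLoss_le_cwLoss {F : MeasurableSpace Ω} {t : ℝ} (ht0 : 0 ≤ t) (ht1 : t ≤ 1)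
    {H : Set Ω} (hH : MeasurableSet[F] H) : bayesLoss P A F t ≤ cwLoss P A H t := by
  refine ciInf_le ⟨0, ?_⟩ (⟨H, hH⟩ : {H : Set Ω // MeasurableSet[F] H})
  rintro _ ⟨S, rfl⟩
  have : 0 ≤ 1 - t := by linarith
  unfold cwLoss
  positivity

theorem le_bayesLoss {F : MeasurableSpace Ω} {t c : ℝ}
    (h : ∀ H, MeasurableSet[F] H → c ≤ cwLoss P A H t) : c ≤ bayesLoss P A F t :=
  have : Nonempty {H : Set Ω // MeasurableSet[F] H} := ⟨⟨∅, MeasurableSet.empty⟩⟩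
  le_ciInf fun H => h H H.2

end

theorem tower_sufficiency_implies_bayes_loss_dominance_general
    {Ω : Type*} {mΩ : MeasurableSpace Ω} {P : Measure Ω} [IsProbabilityMeasure P]
    {A : Set Ω} (hA : MeasurableSet A)
    {mH : MeasurableSpace Ω} (hH : mH ≤ mΩ)
    {mG : MeasurableSpace Ω} (hG : mG ≤ mΩ)
    (hsuff : P[A.indicator (fun _ => (1 : ℝ)) | mH]
      =ᵐ[P] P[P[A.indicator (fun _ => (1 : ℝ)) | mG] | mH]) :
    ∀ t ∈ Set.Ioo (0 : ℝ) 1, bayesLoss P A mG t ≤ bayesLoss P A mH t := by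
  rintro t ⟨ht0, ht1⟩
  have hf : Integrable (A.indicator fun _ => (1 : ℝ)) P := (integrable_const 1).indicator hA
  set g := P[A.indicator (fun _ => (1 : ℝ)) | mG]
  have hgm : Measurable[mG] g := stronglyMeasurable_condExp.measurable
  have hGm : MeasurableSet[mG] {x | t < g x} := measurableSet_lt measurable_const hgm
  refine le_bayesLoss fun H hHm => (bayesLoss_le_cwLoss ht0.le ht1.le hGm).trans ?_
  exact cwLoss_setOf_lt_le hA integrable_condExp (hgm.mono hG le_rfl) (hH H hHm)
    (setIntegral_condExp hG hf hGm).symm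
    (setIntegral_eq_of_condExp_ae_eq hH hf integrable_condExp hsuff hHm)

/-- **Proposition 5 (Brocker-type sufficiency implies dominance of Bayes losses)**: if
`P[A | ℋ] = E[P[A | 𝒢] | ℋ]` a.s. for another sub-σ-field `𝒢` of `𝒜`, then
`L*_𝒢(t) ≤ L*_ℋ(t)` for all `t ∈ (0, 1)`. -/
theorem tower_sufficiency_implies_bayes_loss_dominance
    {Ω : Type*} {mΩ : MeasurableSpace Ω} {P : Measure Ω} [IsProbabilityMeasure P]
    {A : Set Ω} (hA : MeasurableSet A) (hA0 : 0 < P A) (hA1 : P A < 1)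
    {mH : MeasurableSpace Ω} (hH : mH ≤ mΩ) (hAH : ¬ MeasurableSet[mH] A)
    {mG : MeasurableSpace Ω} (hG : mG ≤ mΩ)
    (hsuff : P[A.indicator (fun _ => (1 : ℝ)) | mH]
      =ᵐ[P] P[P[A.indicator (fun _ => (1 : ℝ)) | mG] | mH]) :
    ∀ t ∈ Set.Ioo (0 : ℝ) 1, bayesLoss P A mG t ≤ bayesLoss P A mH t :=
  tower_sufficiency_implies_bayes_loss_dominance_general hA hH hG hsuff
end

section
/- Suppose for each t ∈ (0,1) a classifier H(t) ∈ ℋ is given such that the function h : (0,1) × Ω → {0,1} with h(t,ω) = 1 if ω ∈ H(t) and h(t,ω) = 0 otherwise is measurable with respect to the product σ-field ℬ((0,1)) ⊗ ℋ. Define the ℋ-measurable random variable Z by Z(ω) = ∫₀¹ h(t,ω) dt, and let Ψ = P[A | ℋ]. Then the calibration loss of Z satisfies E[(Z − Ψ)²] = 2 ∫₀¹ ( L({Z > t}, t) − L*_ℋ(t) ) dt ≤ 2 ∫₀¹ ( L(H(t), t) − L*_ℋ(t) ) dt. -/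
open MeasureTheory

/-!
Write `Ψ = P[A | ℋ]`. Since `L(H, t) = (1 - t) P[A] + E[1_H (t - Ψ)]`, the Bayes classifier
`{Ψ > t}` minimises the integrand pointwise, and the regret of `H` at cost `t` is
`E[(1_H - 1_{Ψ > t}) (t - Ψ)]`. Integrating over `t ∈ (0, 1)` and exchanging the integrals reduces
both claims to one `ω` at a time: for `z, ψ ∈ [0, 1]`,
`∫₀¹ (1_{t < z} - 1_{t < ψ}) (t - ψ) dt = (z - ψ)² / 2`, and among all `h : (0, 1) → [0, 1]` with
`∫ h = z` the step function `1_{t < z}` minimises `∫ h(t) (t - ψ) dt` (bathtub principle).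
-/

open Set

/-- The excess cost at threshold `t` of the decision `h ∈ [0, 1]` over the Bayes decision
`1{t < ψ}`, where `ψ` is the conditional probability of `A`. -/
noncomputable def pointwiseRegret (h t ψ : ℝ) : ℝ :=
  (h - (Iio ψ).indicator (fun _ => 1) t) * (t - ψ)

lemma indicator_one_mem_Icc {α : Type*} (s : Set α) (a : α) :
    s.indicator (fun _ => (1 : ℝ)) a ∈ Icc 0 1 := by
  by_cases ha : a ∈ s <;> simp [ha]

lemma abs_indicator_one_le_one {α : Type*} (s : Set α) (a : α) :
    |s.indicator (fun _ => (1 : ℝ)) a| ≤ 1 := by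
  by_cases ha : a ∈ s <;> simp [ha]

lemma abs_sub_indicator_le_one {a : ℝ} (ha : a ∈ Icc 0 1) {α : Type*} (s : Set α) (x : α) :
    |a - s.indicator (fun _ => 1) x| ≤ 1 := by
  have hs := indicator_one_mem_Icc s x
  rw [abs_le]
  constructor <;> linarith [ha.1, ha.2, hs.1, hs.2]

lemma pointwiseRegret_nonneg {h : ℝ} (hh : h ∈ Icc 0 1) (t ψ : ℝ) :
    0 ≤ pointwiseRegret h t ψ := by
  rcases lt_or_ge t ψ with htψ | hψt
  · simp only [pointwiseRegret, indicator_of_mem (mem_Iio.2 htψ)]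
    nlinarith [hh.2]
  · simp only [pointwiseRegret, indicator_of_notMem (notMem_Iio.2 hψt)]
    nlinarith [hh.1]

lemma integrableOn_Ioo_of_abs_le_one {g : ℝ → ℝ} (hg : Measurable g) (hg1 : ∀ t, |g t| ≤ 1) :
    IntegrableOn g (Ioo 0 1) :=
  Integrable.of_bound hg.aestronglyMeasurable 1 (ae_of_all _ hg1)

lemma integrableOn_Ioo_mul_sub {g : ℝ → ℝ} (hg : Measurable g) (hg1 : ∀ t, |g t| ≤ 1) (c : ℝ) :
    IntegrableOn (fun t => g t * (t - c)) (Ioo 0 1) :=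
  Integrable.bdd_mul ((continuous_id.sub continuous_const).integrableOn_Icc.mono_set
    Ioo_subset_Icc_self) hg.aestronglyMeasurable (ae_of_all _ hg1)

lemma integrableOn_pointwiseRegret {h : ℝ → ℝ} (hh : Measurable h) (h01 : ∀ t, h t ∈ Icc 0 1)
    (ψ : ℝ) : IntegrableOn (fun t => pointwiseRegret (h t) t ψ) (Ioo 0 1) :=
  integrableOn_Ioo_mul_sub (hh.sub (measurable_const.indicator measurableSet_Iio))
    (fun t => abs_sub_indicator_le_one (h01 t) _ t) ψ

lemma setIntegral_Ioo_mem_Icc {h : ℝ → ℝ} (h01 : ∀ t, h t ∈ Icc 0 1) :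
    ∫ t in Ioo 0 1, h t ∈ Icc 0 1 := by
  refine ⟨integral_nonneg fun t => (h01 t).1, ?_⟩
  calc ∫ t in Ioo 0 1, h t ≤ ∫ _ in Ioo (0 : ℝ) 1, (1 : ℝ) :=
        integral_mono_of_nonneg (ae_of_all _ fun t => (h01 t).1) (integrable_const 1)
          (ae_of_all _ fun t => (h01 t).2)
    _ = 1 := by simp

lemma setIntegral_Ioo_indicator_Iio_mul {z : ℝ} (hz : z ∈ Icc 0 1) (f : ℝ → ℝ) :
    ∫ t in Ioo 0 1, (Iio z).indicator (fun _ => 1) t * f t = ∫ t in (0)..z, f t := by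
  simp_rw [← indicator_mul_left, one_mul]
  rw [setIntegral_indicator measurableSet_Iio, Ioo_inter_Iio, min_eq_right hz.2,
    intervalIntegral.integral_of_le hz.1, integral_Ioc_eq_integral_Ioo]

lemma setIntegral_pointwiseRegret_indicator_Iio {z ψ : ℝ} (hz : z ∈ Icc 0 1)
    (hψ : ψ ∈ Icc 0 1) :
    ∫ t in Ioo 0 1, pointwiseRegret ((Iio z).indicator (fun _ => 1) t) t ψ = (z - ψ) ^ 2 / 2 := by
  have hint (c : ℝ) := integrableOn_Ioo_mul_sub
    (measurable_const.indicator measurableSet_Iio) (abs_indicator_one_le_one (Iio c)) ψ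
  simp only [pointwiseRegret, sub_mul]
  rw [integral_sub (hint z) (hint ψ), setIntegral_Ioo_indicator_Iio_mul hz,
    setIntegral_Ioo_indicator_Iio_mul hψ,
    intervalIntegral.integral_sub intervalIntegral.intervalIntegrable_id intervalIntegrable_const,
    intervalIntegral.integral_sub intervalIntegral.intervalIntegrable_id intervalIntegrable_const]
  simp
  ring

lemma setIntegral_pointwiseRegret_indicator_Iio_le {h : ℝ → ℝ} (hh : Measurable h)
    (h01 : ∀ t, h t ∈ Icc 0 1) (ψ : ℝ) :
    ∫ t in Ioo 0 1, pointwiseRegret ((Iio (∫ s in Ioo 0 1, h s)).indicator (fun _ => 1) t) t ψ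
      ≤ ∫ t in Ioo 0 1, pointwiseRegret (h t) t ψ := by
  set z := ∫ s in Ioo 0 1, h s
  have hz : z ∈ Icc 0 1 := setIntegral_Ioo_mem_Icc h01
  have hstep : Measurable ((Iio z).indicator fun _ => (1 : ℝ)) :=
    measurable_const.indicator measurableSet_Iio
  set D : ℝ → ℝ := fun t => h t - (Iio z).indicator (fun _ => 1) t
  have hDm : Measurable D := hh.sub hstep
  have hD1 : ∀ t, |D t| ≤ 1 := fun t => abs_sub_indicator_le_one (h01 t) _ t
  have hmass : ∫ t in Ioo 0 1, D t = 0 := by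
    have hstep_int := setIntegral_Ioo_indicator_Iio_mul hz (fun _ => 1)
    simp only [mul_one, intervalIntegral.integral_const, smul_eq_mul, sub_zero] at hstep_int
    rw [integral_sub (integrableOn_Ioo_of_abs_le_one hh
        fun t => abs_le.2 ⟨by linarith [(h01 t).1], (h01 t).2⟩)
      (integrableOn_Ioo_of_abs_le_one hstep (abs_indicator_one_le_one _)), hstep_int, sub_self]
  -- `D` has mass zero, so `ψ` may be replaced by `z`, where the integrand has a sign.
  have hsplit : ∀ t, pointwiseRegret (h t) t ψ
      - pointwiseRegret ((Iio z).indicator (fun _ => 1) t) t ψ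
      = D t * (t - z) + (z - ψ) * D t := fun t => by simp only [pointwiseRegret, D]; ring
  have hsign : ∀ t, 0 ≤ D t * (t - z) := by
    intro t
    rcases lt_or_ge t z with htz | hzt
    · simp only [D, indicator_of_mem (mem_Iio.2 htz)]
      nlinarith [(h01 t).2]
    · simp only [D, indicator_of_notMem (notMem_Iio.2 hzt)]
      nlinarith [(h01 t).1]
  rw [← sub_nonneg, ← integral_sub (integrableOn_pointwiseRegret hh h01 ψ)
      (integrableOn_pointwiseRegret hstep (indicator_one_mem_Icc _) ψ),
    integral_congr_ae (ae_of_all _ hsplit),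
    integral_add (integrableOn_Ioo_mul_sub hDm hD1 z)
      ((integrableOn_Ioo_of_abs_le_one hDm hD1).const_mul (z - ψ)),
    integral_const_mul, hmass, mul_zero, add_zero]
  exact integral_nonneg hsign

section CondProb

-- `mΩ` comes last so that it is the instance behind `MeasurableSet`, `Integrable` and `∫ ∂P`.
variable {Ω : Type*} {mH mΩ : MeasurableSpace Ω} {P : Measure Ω} [IsFiniteMeasure P] {A : Set Ω}

lemma cwLoss_eq_integral (hA : MeasurableSet A) (hH : mH ≤ mΩ) {H : Set Ω}
    (hHm : MeasurableSet[mH] H) (t : ℝ) :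
    cwLoss P A H t = (1 - t) * P.real A
      + ∫ ω, H.indicator (fun _ => 1) ω * (t - P[A.indicator (fun _ => (1 : ℝ)) | mH] ω) ∂P := by
  have hAH := measureReal_sdiff_add_inter (μ := P) (s := A) (hH _ hHm)
  have hAcH := measureReal_sdiff_add_inter (μ := P) (s := H) hA
  rw [sdiff_eq] at hAH hAcH
  have hint : ∫ ω, H.indicator (fun _ => 1) ω * (t - P[A.indicator (fun _ => (1 : ℝ)) | mH] ω) ∂P
      = t * P.real H - P.real (A ∩ H) := by
    have hind : ∀ ω, H.indicator (fun _ => 1) ω * (t - P[A.indicator (fun _ => (1 : ℝ)) | mH] ω)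
        = H.indicator (fun ω => t - P[A.indicator (fun _ => (1 : ℝ)) | mH] ω) ω := fun ω => by
      by_cases hω : ω ∈ H <;> simp [hω]
    rw [integral_congr_ae (ae_of_all _ hind), integral_indicator (hH _ hHm),
      integral_sub (integrable_const t).integrableOn integrable_condExp.integrableOn,
      setIntegral_condExp hH ((integrable_const 1).indicator hA) hHm, setIntegral_indicator hA]
    simp [inter_comm H A, mul_comm]
  simp only [cwLoss, ← measureReal_def, hint]
  rw [inter_comm Aᶜ, inter_comm H A] at *
  linear_combination (1 - t) * hAH + t * hAcH

lemma cwLoss_sub_cwLoss_bayesClassifier (hA : MeasurableSet A) (hH : mH ≤ mΩ) {H : Set Ω}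
    (hHm : MeasurableSet[mH] H) (t : ℝ) :
    cwLoss P A H t - cwLoss P A {ω | t < P[A.indicator (fun _ => (1 : ℝ)) | mH] ω} t
      = ∫ ω, pointwiseRegret (H.indicator (fun _ => 1) ω) t
          (P[A.indicator (fun _ => (1 : ℝ)) | mH] ω) ∂P := by
  have hB : MeasurableSet[mH] {ω | t < P[A.indicator (fun _ => (1 : ℝ)) | mH] ω} :=
    measurableSet_lt measurable_const stronglyMeasurable_condExp.measurable
  have hint {G : Set Ω} (hG : MeasurableSet[mH] G) : Integrable
      (fun ω => G.indicator (fun _ => 1) ω * (t - P[A.indicator (fun _ => (1 : ℝ)) | mH] ω)) P :=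
    ((integrable_const t).sub integrable_condExp).bdd_mul
      (measurable_const.indicator (hH _ hG)).aestronglyMeasurable
      (ae_of_all _ (abs_indicator_one_le_one G))
  rw [cwLoss_eq_integral hA hH hHm, cwLoss_eq_integral hA hH hB, add_sub_add_left_eq_sub,
    ← integral_sub (hint hHm) (hint hB)]
  simp only [pointwiseRegret, sub_mul]
  rfl

lemma bayesLoss_eq_cwLoss_bayesClassifier (hA : MeasurableSet A) (hH : mH ≤ mΩ) (t : ℝ) :
    bayesLoss P A mH t = cwLoss P A {ω | t < P[A.indicator (fun _ => (1 : ℝ)) | mH] ω} t := by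
  have hB : MeasurableSet[mH] {ω | t < P[A.indicator (fun _ => (1 : ℝ)) | mH] ω} :=
    measurableSet_lt measurable_const stronglyMeasurable_condExp.measurable
  have hle (H : {H : Set Ω // MeasurableSet[mH] H}) :
      cwLoss P A {ω | t < P[A.indicator (fun _ => (1 : ℝ)) | mH] ω} t ≤ cwLoss P A H t := by
    rw [← sub_nonneg, cwLoss_sub_cwLoss_bayesClassifier hA hH H.2]
    exact integral_nonneg fun ω => pointwiseRegret_nonneg (indicator_one_mem_Icc _ ω) _ _
  exact le_antisymm (ciInf_le ⟨_, forall_mem_range.2 hle⟩ ⟨_, hB⟩) (le_ciInf hle)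

lemma cwLoss_sub_bayesLoss (hA : MeasurableSet A) (hH : mH ≤ mΩ) {H : Set Ω}
    (hHm : MeasurableSet[mH] H) (t : ℝ) :
    cwLoss P A H t - bayesLoss P A mH t
      = ∫ ω, pointwiseRegret (H.indicator (fun _ => 1) ω) t
          (P[A.indicator (fun _ => (1 : ℝ)) | mH] ω) ∂P := by
  rw [bayesLoss_eq_cwLoss_bayesClassifier hA hH, cwLoss_sub_cwLoss_bayesClassifier hA hH hHm]

lemma condExp_indicator_one_mem_Icc (hA : MeasurableSet A) (hH : mH ≤ mΩ) :
    ∀ᵐ ω ∂P, P[A.indicator (fun _ => (1 : ℝ)) | mH] ω ∈ Icc 0 1 := by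
  have h0 : 0 ≤ᵐ[P] P[A.indicator (fun _ => (1 : ℝ)) | mH] :=
    condExp_nonneg (ae_of_all _ fun ω => (indicator_one_mem_Icc A ω).1)
  have h1 : P[A.indicator (fun _ => (1 : ℝ)) | mH] ≤ᵐ[P] P[fun _ => (1 : ℝ) | mH] :=
    condExp_mono ((integrable_const 1).indicator hA) (integrable_const 1)
      (ae_of_all _ fun ω => (indicator_one_mem_Icc A ω).2)
  rw [condExp_const hH] at h1
  filter_upwards [h0, h1] with ω hω0 hω1 using ⟨hω0, hω1⟩

lemma integrable_pointwiseRegret_prod {F : ℝ × Ω → ℝ} (hF : Measurable F)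
    (hF01 : ∀ p, F p ∈ Icc 0 1) {Ψ : Ω → ℝ} (hΨm : Measurable Ψ) (hΨ : Integrable Ψ P) :
    Integrable (fun p : ℝ × Ω => pointwiseRegret (F p) p.1 (Ψ p.2))
      ((volume.restrict (Ioo 0 1)).prod P) := by
  have hsub : Integrable (fun p : ℝ × Ω => p.1 - Ψ p.2) ((volume.restrict (Ioo 0 1)).prod P) :=
    ((continuous_id.integrableOn_Icc.mono_set Ioo_subset_Icc_self).comp_fst P).sub
      (hΨ.comp_snd _)
  exact hsub.bdd_mul
    (hF.sub (measurable_const.indicator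
      (measurableSet_lt measurable_fst (hΨm.comp measurable_snd)))).aestronglyMeasurable
    (ae_of_all _ fun p => abs_sub_indicator_le_one (hF01 p) _ _)

theorem setIntegral_cwLoss_sub_bayesLoss (hA : MeasurableSet A) (hH : mH ≤ mΩ)
    {G : ℝ → Set Ω} (hG : ∀ t ∈ Ioo 0 1, MeasurableSet[mH] (G t)) {F : ℝ × Ω → ℝ}
    (hF : Measurable F) (hF01 : ∀ p, F p ∈ Icc 0 1)
    (hFG : ∀ t ∈ Ioo 0 1, ∀ ω, F (t, ω) = (G t).indicator (fun _ => 1) ω) :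
    ∫ t in Ioo 0 1, (cwLoss P A (G t) t - bayesLoss P A mH t)
      = ∫ ω, (∫ t in Ioo 0 1, pointwiseRegret (F (t, ω)) t
          (P[A.indicator (fun _ => (1 : ℝ)) | mH] ω)) ∂P := by
  rw [← integral_integral_swap (f := fun t ω =>
    pointwiseRegret (F (t, ω)) t (P[A.indicator (fun _ => (1 : ℝ)) | mH] ω))
    (integrable_pointwiseRegret_prod hF hF01 (stronglyMeasurable_condExp.mono hH).measurable
      integrable_condExp)]
  refine setIntegral_congr_fun measurableSet_Ioo fun t ht => ?_
  simp only [cwLoss_sub_bayesLoss hA hH (hG t ht), hFG t ht]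

lemma setIntegral_cwLoss_threshold_sub_bayesLoss (hA : MeasurableSet A) (hH : mH ≤ mΩ)
    {Z : Ω → ℝ} (hZm : Measurable[mH] Z) :
    ∫ t in Ioo 0 1, (cwLoss P A {ω | Z ω > t} t - bayesLoss P A mH t)
      = ∫ ω, (∫ t in Ioo 0 1, pointwiseRegret ((Iio (Z ω)).indicator (fun _ => 1) t) t
          (P[A.indicator (fun _ => (1 : ℝ)) | mH] ω)) ∂P :=
  setIntegral_cwLoss_sub_bayesLoss hA hH (fun _ _ => measurableSet_lt measurable_const hZm)
    (F := fun p => (Iio (Z p.2)).indicator (fun _ => 1) p.1)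
    (measurable_const.indicator
      (measurableSet_lt measurable_fst ((hZm.mono hH le_rfl).comp measurable_snd)))
    (fun _ => indicator_one_mem_Icc _ _) (fun _ _ _ => rfl)

theorem integral_sq_sub_condExp_eq (hA : MeasurableSet A) (hH : mH ≤ mΩ) {Z : Ω → ℝ}
    (hZm : Measurable[mH] Z) (hZ01 : ∀ ω, Z ω ∈ Icc 0 1) :
    ∫ ω, (Z ω - P[A.indicator (fun _ => (1 : ℝ)) | mH] ω) ^ 2 ∂P
      = 2 * ∫ t in Ioo 0 1, (cwLoss P A {ω | Z ω > t} t - bayesLoss P A mH t) := by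
  rw [setIntegral_cwLoss_threshold_sub_bayesLoss hA hH hZm, ← integral_const_mul]
  refine integral_congr_ae ?_
  filter_upwards [condExp_indicator_one_mem_Icc hA hH] with ω hψ
  rw [setIntegral_pointwiseRegret_indicator_Iio (hZ01 ω) hψ]
  ring

theorem setIntegral_cwLoss_sub_bayesLoss_threshold_le (hA : MeasurableSet A) (hH : mH ≤ mΩ)
    {G : ℝ → Set Ω} (hG : ∀ t ∈ Ioo 0 1, MeasurableSet[mH] (G t)) {F : ℝ × Ω → ℝ}
    (hF : Measurable F) (hF01 : ∀ p, F p ∈ Icc 0 1)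
    (hFG : ∀ t ∈ Ioo 0 1, ∀ ω, F (t, ω) = (G t).indicator (fun _ => 1) ω)
    {Z : Ω → ℝ} (hZ : ∀ ω, Z ω = ∫ t in Ioo 0 1, F (t, ω)) (hZm : Measurable[mH] Z) :
    ∫ t in Ioo 0 1, (cwLoss P A {ω | Z ω > t} t - bayesLoss P A mH t)
      ≤ ∫ t in Ioo 0 1, (cwLoss P A (G t) t - bayesLoss P A mH t) := by
  rw [setIntegral_cwLoss_threshold_sub_bayesLoss hA hH hZm,
    setIntegral_cwLoss_sub_bayesLoss hA hH hG hF hF01 hFG]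
  refine integral_mono_of_nonneg (ae_of_all _ fun ω => integral_nonneg fun t =>
      pointwiseRegret_nonneg (indicator_one_mem_Icc _ _) _ _)
    (integrable_pointwiseRegret_prod hF hF01 (stronglyMeasurable_condExp.mono hH).measurable
      integrable_condExp).integral_prod_right (ae_of_all _ fun ω => ?_)
  beta_reduce
  rw [hZ ω]
  exact setIntegral_pointwiseRegret_indicator_Iio_le (hF.comp measurable_prodMk_right)
    (fun t => hF01 (t, ω)) _

end CondProb

theorem probing_reduction_general
    {Ω : Type*} {mΩ : MeasurableSpace Ω} {P : Measure Ω} [IsProbabilityMeasure P]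
    {A : Set Ω} (hA : MeasurableSet A)
    {mH : MeasurableSpace Ω} (hH : mH ≤ mΩ)
    (Hfam : ℝ → Set Ω)
    (hHfam : ∀ t ∈ Set.Ioo (0 : ℝ) 1, MeasurableSet[mH] (Hfam t))
    (hjoint : MeasurableSet[(inferInstance : MeasurableSpace ℝ).prod mH]
      {p : ℝ × Ω | p.1 ∈ Set.Ioo (0 : ℝ) 1 ∧ p.2 ∈ Hfam p.1})
    (Z : Ω → ℝ)
    (hZ : ∀ ω, Z ω = ∫ t in (0 : ℝ)..1, (Hfam t).indicator (fun _ => (1 : ℝ)) ω) :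
    (∫ ω, (Z ω - (P[A.indicator (fun _ => (1 : ℝ)) | mH]) ω) ^ 2 ∂P
        = 2 * ∫ t in (0 : ℝ)..1, (cwLoss P A {ω | Z ω > t} t - bayesLoss P A mH t))
    ∧ 2 * ∫ t in (0 : ℝ)..1, (cwLoss P A {ω | Z ω > t} t - bayesLoss P A mH t)
        ≤ 2 * ∫ t in (0 : ℝ)..1, (cwLoss P A (Hfam t) t - bayesLoss P A mH t) := by
  set F : ℝ × Ω → ℝ := {p | p.1 ∈ Ioo (0 : ℝ) 1 ∧ p.2 ∈ Hfam p.1}.indicator fun _ => 1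
  have hFm : Measurable[(inferInstance : MeasurableSpace ℝ).prod mH] F :=
    measurable_const.indicator hjoint
  have hF01 (p : ℝ × Ω) : F p ∈ Icc 0 1 := indicator_one_mem_Icc _ p
  have hFG : ∀ t ∈ Ioo (0 : ℝ) 1, ∀ ω, F (t, ω) = (Hfam t).indicator (fun _ => 1) ω :=
    fun t ht ω => by classical simp [F, indicator_apply, ht.1, ht.2]
  have hZF (ω : Ω) : Z ω = ∫ t in Ioo 0 1, F (t, ω) := by
    rw [hZ, intervalIntegral.integral_of_le zero_le_one, integral_Ioc_eq_integral_Ioo]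
    exact setIntegral_congr_fun measurableSet_Ioo fun t ht => (hFG t ht ω).symm
  have hZm : Measurable[mH] Z := by
    rw [funext hZF]
    exact hFm.stronglyMeasurable.integral_prod_left'.measurable
  simp only [intervalIntegral.integral_of_le zero_le_one, integral_Ioc_eq_integral_Ioo]
  refine ⟨integral_sq_sub_condExp_eq hA hH hZm fun ω =>
    hZF ω ▸ setIntegral_Ioo_mem_Icc fun t => hF01 (t, ω), ?_⟩
  exact mul_le_mul_of_nonneg_left (setIntegral_cwLoss_sub_bayesLoss_threshold_le hA hH hHfam
    (hFm.mono (sup_le_sup le_rfl (MeasurableSpace.comap_mono hH)) le_rfl) hF01 hFG hZF hZm)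
    zero_le_two

/-- **Theorem 2 (probing reduction, after Langford & Zadrozny)**: given a jointly measurable
family of classifiers `H(t) ∈ ℋ`, `t ∈ (0, 1)`, the probing predictor
`Z(ω) = ∫₀¹ 1_{H(t)}(ω) dt` satisfies
`E[(Z − Ψ)²] = 2 ∫₀¹ (L({Z > t}, t) − L*_ℋ(t)) dt ≤ 2 ∫₀¹ (L(H(t), t) − L*_ℋ(t)) dt`. -/
theorem probing_reduction
    {Ω : Type*} {mΩ : MeasurableSpace Ω} {P : Measure Ω} [IsProbabilityMeasure P]
    {A : Set Ω} (hA : MeasurableSet A) (hA0 : 0 < P A) (hA1 : P A < 1)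
    {mH : MeasurableSpace Ω} (hH : mH ≤ mΩ) (hAH : ¬ MeasurableSet[mH] A)
    (Hfam : ℝ → Set Ω)
    (hHfam : ∀ t ∈ Set.Ioo (0 : ℝ) 1, MeasurableSet[mH] (Hfam t))
    (hjoint : MeasurableSet[(inferInstance : MeasurableSpace ℝ).prod mH]
      {p : ℝ × Ω | p.1 ∈ Set.Ioo (0 : ℝ) 1 ∧ p.2 ∈ Hfam p.1})
    (Z : Ω → ℝ)
    (hZ : ∀ ω, Z ω = ∫ t in (0 : ℝ)..1, (Hfam t).indicator (fun _ => (1 : ℝ)) ω) :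
    (∫ ω, (Z ω - (P[A.indicator (fun _ => (1 : ℝ)) | mH]) ω) ^ 2 ∂P
        = 2 * ∫ t in (0 : ℝ)..1, (cwLoss P A {ω | Z ω > t} t - bayesLoss P A mH t))
    ∧ 2 * ∫ t in (0 : ℝ)..1, (cwLoss P A {ω | Z ω > t} t - bayesLoss P A mH t)
        ≤ 2 * ∫ t in (0 : ℝ)..1, (cwLoss P A (Hfam t) t - bayesLoss P A mH t) :=
  probing_reduction_general hA hH Hfam hHfam hjoint Z hZ
end

section
/- Let 𝒢 be a sub-σ-field of ℋ, Ψ = P[A | 𝒢] a version of the conditional probability with values in [0,1], and B(t) = L({Ψ > t}, t) its Brier curve. Then for all t ∈ [0,1]: min(t, 1−t) · E[Ψ(1−Ψ)] ≤ B(t) ≤ E[Ψ(1−Ψ)]. -/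
/-!
On every `𝒢`-measurable set `s` the defining property of `Ψ = P[A | 𝒢]` gives
`P[A ∩ s] = E[Ψ; s]` and `P[Aᶜ ∩ s] = E[1 - Ψ; s]`. Since `{Ψ > t}` is `𝒢`-measurable,
the Brier curve is therefore `B(t) = E[ℓ_t(Ψ)]` with `ℓ_t(p) = t (1 - p)` for `p > t` and
`ℓ_t(p) = (1 - t) p` otherwise, and the bounds follow by integrating the elementary inequalities
`min(t, 1 - t) p (1 - p) ≤ ℓ_t(p) ≤ p (1 - p)` on `[0, 1]`.
-/

open MeasureTheory

open Set

noncomputable def brierLoss (t p : ℝ) : ℝ :=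
  if t < p then t * (1 - p) else (1 - t) * p

lemma measurable_brierLoss (t : ℝ) : Measurable (brierLoss t) :=
  Measurable.ite measurableSet_Ioi (by fun_prop) (by fun_prop)

section BrierLossBounds

variable {t p : ℝ}

lemma brierLoss_nonneg (ht : t ∈ Icc (0 : ℝ) 1) (hp : p ∈ Icc (0 : ℝ) 1) :
    0 ≤ brierLoss t p := by
  obtain ⟨ht0, ht1⟩ := ht
  obtain ⟨hp0, hp1⟩ := hp
  unfold brierLoss
  split_ifs <;> nlinarith

lemma brierLoss_le (hp : p ∈ Icc (0 : ℝ) 1) :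
    brierLoss t p ≤ p * (1 - p) := by
  obtain ⟨hp0, hp1⟩ := hp
  unfold brierLoss
  split_ifs with htp
  · nlinarith
  · nlinarith [not_lt.mp htp]

lemma min_mul_le_brierLoss (ht : t ∈ Icc (0 : ℝ) 1) (hp : p ∈ Icc (0 : ℝ) 1) :
    min t (1 - t) * (p * (1 - p)) ≤ brierLoss t p := by
  obtain ⟨ht0, ht1⟩ := ht
  obtain ⟨hp0, hp1⟩ := hp
  have hpq : 0 ≤ p * (1 - p) := mul_nonneg hp0 (by linarith)
  unfold brierLoss
  split_ifs with htp
  · calc min t (1 - t) * (p * (1 - p))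
        _ ≤ t * (p * (1 - p)) := by gcongr; exact min_le_left _ _
        _ ≤ t * (1 - p) := by gcongr; nlinarith
  · calc min t (1 - t) * (p * (1 - p))
        _ ≤ (1 - t) * (p * (1 - p)) := by gcongr; exact min_le_right _ _
        _ ≤ (1 - t) * p := by gcongr; nlinarith

end BrierLossBounds

section ConditionalProbability

variable {Ω : Type*} {m mΩ : MeasurableSpace Ω} {P : Measure Ω} [IsFiniteMeasure P]
  {A s : Set Ω} {Ψ : Ω → ℝ}

lemma measureReal_inter_eq_setIntegral_of_ae_eq_condExp (hm : m ≤ mΩ) (hA : MeasurableSet A)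
    (hΨ : Ψ =ᵐ[P] P[A.indicator (fun _ => (1 : ℝ)) | m]) (hs : MeasurableSet[m] s) :
    P.real (A ∩ s) = ∫ ω in s, Ψ ω ∂P := by
  rw [setIntegral_congr_ae (hm s hs) (hΨ.mono fun ω h _ => h),
    setIntegral_condExp hm ((integrable_const (1 : ℝ)).indicator hA) hs,
    setIntegral_indicator hA, setIntegral_const, smul_eq_mul, mul_one, inter_comm]

lemma measureReal_compl_inter_eq_setIntegral_of_ae_eq_condExp (hm : m ≤ mΩ)
    (hA : MeasurableSet A) (hΨ : Ψ =ᵐ[P] P[A.indicator (fun _ => (1 : ℝ)) | m])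
    (hs : MeasurableSet[m] s) :
    P.real (Aᶜ ∩ s) = ∫ ω in s, (1 - Ψ ω) ∂P := by
  have hΨint : Integrable Ψ P := integrable_condExp.congr hΨ.symm
  rw [integral_sub (integrable_const 1).integrableOn hΨint.integrableOn, setIntegral_const,
    smul_eq_mul, mul_one, ← measureReal_inter_eq_setIntegral_of_ae_eq_condExp hm hA hΨ hs,
    ← measureReal_sdiff_add_inter (s := s) hA, inter_comm Aᶜ, inter_comm A, sdiff_eq]
  ring

lemma cwLoss_superlevelSet_eq_integral_brierLoss (hm : m ≤ mΩ) (hA : MeasurableSet A)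
    (hΨm : Measurable[m] Ψ) (hΨ : Ψ =ᵐ[P] P[A.indicator (fun _ => (1 : ℝ)) | m]) (t : ℝ) :
    cwLoss P A {ω | Ψ ω > t} t = ∫ ω, brierLoss t (Ψ ω) ∂P := by
  classical
  set s := {ω | Ψ ω > t}
  have hs : MeasurableSet[m] s := measurableSet_lt measurable_const hΨm
  have hΨint : Integrable Ψ P := integrable_condExp.congr hΨ.symm
  have hpiece : (fun ω => brierLoss t (Ψ ω))
      = s.piecewise (fun ω => t * (1 - Ψ ω)) (fun ω => (1 - t) * Ψ ω) := by
    ext ω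
    simp only [brierLoss, Set.piecewise, s, mem_ofPred_eq, gt_iff_lt]
  have hpos : Integrable (fun ω => t * (1 - Ψ ω)) P :=
    ((integrable_const 1).sub hΨint).const_mul t
  have hneg : Integrable (fun ω => (1 - t) * Ψ ω) P := hΨint.const_mul (1 - t)
  rw [hpiece, integral_piecewise (hm s hs) hpos.integrableOn hneg.integrableOn,
    integral_const_mul, integral_const_mul, cwLoss, ← measureReal_def, ← measureReal_def,
    measureReal_inter_eq_setIntegral_of_ae_eq_condExp hm hA hΨ hs.compl,
    measureReal_compl_inter_eq_setIntegral_of_ae_eq_condExp hm hA hΨ hs]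
  ring

end ConditionalProbability

theorem brier_curve_bounds_general
    {Ω : Type*} {mΩ : MeasurableSpace Ω} {P : Measure Ω} [IsProbabilityMeasure P]
    {A : Set Ω} (hA : MeasurableSet A)
    {mH : MeasurableSpace Ω} (hH : mH ≤ mΩ)
    {mG : MeasurableSpace Ω} (hG : mG ≤ mH)
    {Ψ : Ω → ℝ} (hΨm : Measurable[mG] Ψ) (hΨ01 : ∀ ω, Ψ ω ∈ Set.Icc (0 : ℝ) 1)
    (hΨ : Ψ =ᵐ[P] P[A.indicator (fun _ => (1 : ℝ)) | mG])
    (B : ℝ → ℝ) (hB : ∀ t, B t = cwLoss P A {ω | Ψ ω > t} t) :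
    ∀ t ∈ Set.Icc (0 : ℝ) 1,
      min t (1 - t) * ∫ ω, Ψ ω * (1 - Ψ ω) ∂P ≤ B t
      ∧ B t ≤ ∫ ω, Ψ ω * (1 - Ψ ω) ∂P := by
  intro t ht
  have hm : mG ≤ mΩ := hG.trans hH
  have hΨmeas : Measurable[mΩ] Ψ := hΨm.mono hm le_rfl
  have hvar : Integrable (fun ω => Ψ ω * (1 - Ψ ω)) P := by
    refine Integrable.of_bound
      (hΨmeas.mul (measurable_const.sub hΨmeas)).aestronglyMeasurable 1 (ae_of_all _ fun ω => ?_)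
    obtain ⟨h0, h1⟩ := hΨ01 ω
    rw [Real.norm_eq_abs, abs_of_nonneg (mul_nonneg h0 (by linarith))]
    exact mul_le_one₀ h1 (by linarith) (by linarith)
  have hloss : Integrable (fun ω => brierLoss t (Ψ ω)) P := by
    refine hvar.mono' ((measurable_brierLoss t).comp hΨmeas).aestronglyMeasurable
      (ae_of_all _ fun ω => ?_)
    rw [Real.norm_eq_abs, abs_of_nonneg (brierLoss_nonneg ht (hΨ01 ω))]
    exact brierLoss_le (hΨ01 ω)
  rw [hB t, cwLoss_superlevelSet_eq_integral_brierLoss hm hA hΨm hΨ t, ← integral_const_mul]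
  exact ⟨integral_mono (hvar.const_mul _) hloss fun ω => min_mul_le_brierLoss ht (hΨ01 ω),
    integral_mono hloss hvar fun ω => brierLoss_le (hΨ01 ω)⟩

/-- **Proposition 7, item 2 (bounds on the Brier curve)**: for a `[0,1]`-valued version `Ψ`
of `P[A | 𝒢]`, `𝒢 ⊆ ℋ`, the Brier curve `B(t) = L({Ψ > t}, t)` satisfies
`min(t, 1 − t) E[Ψ (1 − Ψ)] ≤ B(t) ≤ E[Ψ (1 − Ψ)]` for all `t ∈ [0, 1]`. -/
theorem brier_curve_bounds
    {Ω : Type*} {mΩ : MeasurableSpace Ω} {P : Measure Ω} [IsProbabilityMeasure P]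
    {A : Set Ω} (hA : MeasurableSet A) (hA0 : 0 < P A) (hA1 : P A < 1)
    {mH : MeasurableSpace Ω} (hH : mH ≤ mΩ) (hAH : ¬ MeasurableSet[mH] A)
    {mG : MeasurableSpace Ω} (hG : mG ≤ mH)
    {Ψ : Ω → ℝ} (hΨm : Measurable[mG] Ψ) (hΨ01 : ∀ ω, Ψ ω ∈ Set.Icc (0 : ℝ) 1)
    (hΨ : Ψ =ᵐ[P] P[A.indicator (fun _ => (1 : ℝ)) | mG])
    (B : ℝ → ℝ) (hB : ∀ t, B t = cwLoss P A {ω | Ψ ω > t} t) :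
    ∀ t ∈ Set.Icc (0 : ℝ) 1,
      min t (1 - t) * ∫ ω, Ψ ω * (1 - Ψ ω) ∂P ≤ B t
      ∧ B t ≤ ∫ ω, Ψ ω * (1 - Ψ ω) ∂P :=
  brier_curve_bounds_general hA hH hG hΨm hΨ01 hΨ B hB
end
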